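/- Let G = (V, E) be a digraph containing vertices v_1,…,v_l such that the set F = {u ∈ V : (v_i,u) ∈ E for all i} induces a loopless triangle (i.e., F = {a,b,c} with a,b,c distinct, (x,y) ∈ E for all distinct x,y ∈ F, and (x,x) ∉ E for all x ∈ F). Let H be an undirected graph, and let H' be the digraph on V(H) ∪ {w_1,…,w_l} (new vertices) with edges {(u,v), (v,u) : {u,v} ∈ E(H)} ∪ {(w_i, u) : 1 ≤ i ≤ l, u ∈ V(H)}. Then the partial map f(w_i) = v_i extends to a digraph homomorphism H' → G if and only if H is 3-colorable. -/

import Mathlib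

/-!
A homomorphism of the gadget `H'` sending each `wᵢ` to `vᵢ` must send every vertex of `H`
to a common out-neighbour of all the `vᵢ`, that is into the triangle `F`; on `H` itself it is
then a homomorphism `H → F`. Since `F` is a loopless triangle, such maps are exactly proper
colourings of `H` by the three vertices of `F`.
-/

open SimpleGraph

variable {V β : Type*}

theorem exists_extension_iff_exists_hom {l : ℕ} (E : V → V → Prop) (v : Fin l → V)
    (H : SimpleGraph β) (E' : β ⊕ Fin l → β ⊕ Fin l → Prop)
    (hE' : ∀ x y, E' x y ↔
      ((∃ u w, H.Adj u w ∧ x = Sum.inl u ∧ y = Sum.inl w) ∨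
       (∃ i u, x = Sum.inr i ∧ y = Sum.inl u))) :
    (∃ g : β ⊕ Fin l → V, (∀ x y, E' x y → E (g x) (g y)) ∧ ∀ i, g (Sum.inr i) = v i) ↔
      ∃ h : β → V, (∀ u i, E (v i) (h u)) ∧ ∀ u w, H.Adj u w → E (h u) (h w) := by
  constructor
  · rintro ⟨g, hg, hgv⟩
    refine ⟨g ∘ Sum.inl, fun u i => ?_, fun u w huw => ?_⟩
    · exact hgv i ▸ hg _ _ ((hE' _ _).2 (.inr ⟨i, u, rfl, rfl⟩))
    · exact hg _ _ ((hE' _ _).2 (.inl ⟨u, w, huw, rfl, rfl⟩))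
  · rintro ⟨h, hv, hadj⟩
    refine ⟨Sum.elim h v, fun x y hxy => ?_, fun _ => rfl⟩
    rcases (hE' x y).1 hxy with ⟨u, w, huw, rfl, rfl⟩ | ⟨i, u, rfl, rfl⟩
    exacts [hadj u w huw, hv u i]

theorem exists_hom_into_iff_nonempty_coloring (E : V → V → Prop) {S : Set V}
    (hS : ∀ x ∈ S, ∀ y ∈ S, E x y ↔ x ≠ y) (H : SimpleGraph β) :
    (∃ h : β → V, (∀ u, h u ∈ S) ∧ ∀ u w, H.Adj u w → E (h u) (h w)) ↔
      Nonempty (H.Coloring S) := by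
  constructor
  · rintro ⟨h, hhS, hadj⟩
    exact ⟨Coloring.mk (fun u => ⟨h u, hhS u⟩) fun huw =>
      Subtype.coe_ne_coe.1 ((hS _ (hhS _) _ (hhS _)).1 (hadj _ _ huw))⟩
  · rintro ⟨C⟩
    exact ⟨fun u => C u, fun u => (C u).2, fun u w huw =>
      (hS _ (C u).2 _ (C w).2).2 (Subtype.coe_ne_coe.2 (C.valid huw))⟩

theorem SimpleGraph.colorable_iff_nonempty_coloring {G : SimpleGraph β} {α : Type*} [Finite α]
    {n : ℕ} (hα : Nat.card α = n) : G.Colorable n ↔ Nonempty (G.Coloring α) := by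
  obtain ⟨e⟩ : Nonempty (Fin n ≃ α) := Finite.card_eq.1 (by rw [Nat.card_fin, hα])
  exact ⟨fun ⟨C⟩ => ⟨G.recolorOfEquiv e C⟩, fun ⟨C⟩ => ⟨G.recolorOfEquiv e.symm C⟩⟩

/-- if a digraph `G = (V, E)` has vertices `v 1, …, v l` such that
`F = {u | ∀ i, E (v i) u}` induces a loopless triangle `{a,b,c}`, then for any simple
graph `H`, the partial map `wᵢ ↦ vᵢ` on the gadget digraph `H'` (symmetrized `H`
plus new vertices `w 1, …, w l` with all edges `(wᵢ, u)`, `u ∈ V(H)`) extends to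
a digraph homomorphism `H' → G` iff `H` is 3-colorable. -/
theorem stmt9 {V : Type} (E : V → V → Prop) (l : ℕ) (v : Fin l → V)
    (a b c : V) (hab : a ≠ b) (hbc : b ≠ c) (hac : a ≠ c)
    (hF : {u : V | ∀ i, E (v i) u} = {a, b, c})
    (htri : ∀ x ∈ ({a, b, c} : Set V), ∀ y ∈ ({a, b, c} : Set V), E x y ↔ x ≠ y)
    {β : Type} (H : SimpleGraph β)
    (E' : β ⊕ Fin l → β ⊕ Fin l → Prop)
    (hE' : ∀ x y, E' x y ↔
      ((∃ u w, H.Adj u w ∧ x = Sum.inl u ∧ y = Sum.inl w) ∨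
       (∃ i u, x = Sum.inr i ∧ y = Sum.inl u))) :
    (∃ g : β ⊕ Fin l → V,
        (∀ x y, E' x y → E (g x) (g y)) ∧ (∀ i : Fin l, g (Sum.inr i) = v i)) ↔
      H.Colorable 3 := by
  have hF' (u : V) : (∀ i, E (v i) u) ↔ u ∈ ({a, b, c} : Set V) := Set.ext_iff.1 hF u
  have hcard : Nat.card ({a, b, c} : Set V) = 3 := by
    rw [Nat.card_coe_set_eq, Set.ncard_eq_three]
    exact ⟨a, b, c, hab, hac, hbc, rfl⟩
  simp_rw [exists_extension_iff_exists_hom E v H E' hE', hF']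
  rw [exists_hom_into_iff_nonempty_coloring E htri, colorable_iff_nonempty_coloring hcard]
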